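/- Let p be an odd prime and let r be an integer with 0 < r < p. Then b_{r,p−r}(α) is the zero polynomial of F_p[α]. -/

import Mathlib

/-!
With `s = p - r` the ratio `-r/s` is `1` in `𝔽_p`, and `1 / ((p-1-k)! k!) = C(p-1, k) / (p-1)!`,
so by the Chu–Vandermonde identity for falling factorials `(p-1)! · b_{r,s}(α)` is the falling
factorial `(x)_{p-1}` at `x = (rα - 1) + (sα - 1) = -2 = p - 2`, which vanishes since `p - 2 < p - 1`.
-/

open Polynomial Finset

noncomputable def binomF {K : Type*} [Field K] (f : K) (m : ℕ) : K :=
  Polynomial.eval f (descPochhammer K m) / (m.factorial : K)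

noncomputable def bPoly (p : ℕ) [Fact p.Prime] (r s : ℕ) : Polynomial (ZMod p) :=
  ∑ k ∈ Finset.range p,
    Polynomial.C ((-(r : ZMod p) / (s : ZMod p)) ^ k /
        (((p - 1 - k).factorial : ZMod p) * (k.factorial : ZMod p))) *
      Polynomial.eval (Polynomial.C (r : ZMod p) * Polynomial.X - 1)
        (descPochhammer (Polynomial (ZMod p)) (p - 1 - k)) *
      Polynomial.eval (Polynomial.C (s : ZMod p) * Polynomial.X - 1)
        (descPochhammer (Polynomial (ZMod p)) k)

theorem descPochhammer_smeval_eq_eval {R : Type*} [Ring R] (x : R) (n : ℕ) :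
    (descPochhammer ℤ n).smeval x = (descPochhammer R n).eval x := by
  rw [← aeval_eq_smeval, ← eval_map_algebraMap, descPochhammer_map]

theorem descPochhammer_eval_add {R : Type*} [Ring R] {x y : R} (h : Commute x y) (n : ℕ) :
    (descPochhammer R n).eval (x + y) = ∑ k ∈ range (n + 1),
      (n.choose k : R) * ((descPochhammer R k).eval x * (descPochhammer R (n - k)).eval y) := by
  simp only [← descPochhammer_smeval_eq_eval]
  rw [Ring.descPochhammer_smeval_add n h, Nat.sum_antidiagonal_eq_sum_range_succ
    (fun i j => (n.choose i : R) * ((descPochhammer ℤ i).smeval x * (descPochhammer ℤ j).smeval y))]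

theorem inv_factorial_mul_factorial_eq {K : Type*} [Field K] {n k : ℕ} (hk : k ≤ n)
    (hn : (n.factorial : K) ≠ 0) :
    (((n - k).factorial : K) * k.factorial)⁻¹ = (n.factorial : K)⁻¹ * n.choose k := by
  have hfac : (n.choose k : K) * k.factorial * (n - k).factorial = n.factorial := by
    rw [← Nat.cast_mul, ← Nat.cast_mul, Nat.choose_mul_factorial_mul_factorial hk]
  rw [← hfac] at hn ⊢
  have hchoose : (n.choose k : K) ≠ 0 := left_ne_zero_of_mul (left_ne_zero_of_mul hn)
  field_simp

theorem descPochhammer_eval_neg_two_eq_zero {R : Type*} [Ring R] (p : ℕ) [CharP R p]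
    (hp : 2 ≤ p) : (descPochhammer R (p - 1)).eval (-2) = 0 := by
  have hcast : (-2 : R) = ((p - 2 : ℕ) : R) := by
    rw [Nat.cast_sub hp, CharP.cast_eq_zero, zero_sub, Nat.cast_ofNat]
  rw [hcast, descPochhammer_eval_coe_nat_of_lt (by omega)]

theorem bPoly_eq_of_neg_div_eq_one {p : ℕ} [Fact p.Prime] {r s : ℕ}
    (h : -(r : ZMod p) / s = 1) :
    bPoly p r s = C ((p - 1).factorial : ZMod p)⁻¹ *
      (descPochhammer _ (p - 1)).eval ((C (s : ZMod p) * X - 1) + (C (r : ZMod p) * X - 1)) := by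
  have hp : p - 1 + 1 = p := Nat.sub_add_cancel (Fact.out : p.Prime).one_le
  have hfac : ((p - 1).factorial : ZMod p) ≠ 0 := by
    rw [ZMod.wilsons_lemma]
    exact neg_ne_zero.mpr one_ne_zero
  rw [descPochhammer_eval_add (Commute.all _ _), hp, mul_sum, bPoly]
  refine sum_congr rfl fun k hk => ?_
  rw [h, one_pow, one_div,
    inv_factorial_mul_factorial_eq (by simp only [mem_range] at hk; omega) hfac, C_mul,
    ← map_natCast C]
  ring

theorem stmt17_general (p r : ℕ) [Fact p.Prime] (hr0 : 0 < r) (hrp : r < p) :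
    bPoly p r (p - r) = 0 := by
  have hr : (r : ZMod p) ≠ 0 :=
    (ZMod.natCast_eq_zero_iff r p).not.mpr (Nat.not_dvd_of_pos_of_lt hr0 hrp)
  have hs : ((p - r : ℕ) : ZMod p) = -r := by
    rw [Nat.cast_sub hrp.le, ZMod.natCast_self, zero_sub]
  have hsum : C ((p - r : ℕ) : ZMod p) * X - 1 + (C (r : ZMod p) * X - 1) = -2 := by
    rw [hs, C_neg]
    ring
  rw [bPoly_eq_of_neg_div_eq_one (by rw [hs, neg_div_neg_eq, div_self hr]), hsum,
    descPochhammer_eval_neg_two_eq_zero p (Fact.out : p.Prime).two_le, mul_zero]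

theorem stmt17 (p r : ℕ) [Fact p.Prime] (hodd : Odd p) (hr0 : 0 < r) (hrp : r < p) :
    bPoly p r (p - r) = 0 :=
  stmt17_general p r hr0 hrp
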